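/- If σ, σ' ∈ S_n satisfy χ(σ) ≡ χ(σ') (mod p^m) for every character χ of S_n, then the cycle types of σ and σ' are related by the equivalence relation generated by replacing p^m parts of size k with p^(m−1) parts of size pk. -/

import Mathlib

/-!
The permutation representation of `S_n` on `t`-element subsets of `Fin n` has character
`σ ↦ #{σ-invariant t-subsets}`. The invariant subsets are the unions of cycles, so these numbers
are the coefficients of `∏_{c ∈ cycle type} (1 + X ^ c)`, and the hypothesis says that these
polynomials agree in `(ZMod (p ^ m))[X]`. A move does not change the polynomial there, because
`(1 + X ^ k) ^ p ^ m ≡ (1 + X ^ (p * k)) ^ p ^ (m - 1) mod p ^ m`. Moves bring every cycle type to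
one in which each part occurs fewer than `p ^ m` times, and such a multiset is recovered from its
polynomial mod `p ^ m`: the coefficient of `X ^ k`, for the smallest part `k`, is the multiplicity
of `k`, and the factor `(1 + X ^ k) ^ a` is monic, hence cancellable.
-/

open Equiv

/-- The full cycle type of a permutation of `Fin n`: the cycle lengths including
fixed points as cycles of length 1. -/
def fullCycleType {n : ℕ} (σ : Equiv.Perm (Fin n)) : Multiset ℕ :=
  σ.cycleType + Multiset.replicate (n - σ.cycleType.sum) 1

open Polynomial Finset Equiv.Perm
open scoped Pointwise

lemma Multiset.filter_ne_add_replicate_count {α : Type*} [DecidableEq α] (s : Multiset α)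
    (a : α) : s.filter (· ≠ a) + replicate (s.count a) a = s := by
  rw [← filter_eq', add_comm]
  exact filter_add_not _ s

noncomputable def subsumPoly (R : Type*) [CommSemiring R] (lam : Multiset ℕ) : R[X] :=
  (lam.map fun c => 1 + X ^ c).prod

section SubsumPoly

variable {R : Type*} [CommSemiring R]

@[simp]
lemma subsumPoly_zero : subsumPoly R 0 = 1 := by simp [subsumPoly]

@[simp]
lemma subsumPoly_cons (c : ℕ) (lam : Multiset ℕ) :
    subsumPoly R (c ::ₘ lam) = (1 + X ^ c) * subsumPoly R lam := by
  simp [subsumPoly]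

@[simp]
lemma subsumPoly_add (lam mu : Multiset ℕ) :
    subsumPoly R (lam + mu) = subsumPoly R lam * subsumPoly R mu := by
  simp [subsumPoly]

@[simp]
lemma subsumPoly_replicate (a k : ℕ) :
    subsumPoly R (Multiset.replicate a k) = (1 + X ^ k) ^ a := by
  simp [subsumPoly, Multiset.map_replicate]

lemma monic_one_add_X_pow {k : ℕ} (hk : k ≠ 0) : (1 + X ^ k : R[X]).Monic := by
  simpa [add_comm] using monic_X_pow_add_C (1 : R) hk

lemma coeff_zero_subsumPoly {lam : Multiset ℕ} (h0 : 0 ∉ lam) :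
    (subsumPoly R lam).coeff 0 = 1 := by
  induction lam using Multiset.induction with
  | empty => simp
  | cons c lam ih =>
    rw [Multiset.mem_cons, not_or] at h0
    simp [mul_coeff_zero, ih h0.2, coeff_X_pow, h0.1]

lemma coeff_subsumPoly_of_forall_le {k : ℕ} (hk : k ≠ 0) {lam : Multiset ℕ}
    (hle : ∀ c ∈ lam, k ≤ c) : (subsumPoly R lam).coeff k = lam.count k := by
  induction lam using Multiset.induction with
  | empty => simp [coeff_one, hk]
  | cons c lam ih =>
    have hc : k ≤ c := hle c (Multiset.mem_cons_self c lam)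
    have hle' : ∀ c ∈ lam, k ≤ c := fun c hc => hle c (Multiset.mem_cons_of_mem hc)
    have h0 : 0 ∉ lam := fun h => hk (Nat.le_zero.mp (hle' 0 h))
    rw [subsumPoly_cons, add_mul, one_mul, coeff_add, ih hle', coeff_X_pow_mul']
    rcases hc.eq_or_lt with rfl | hlt
    · simp [coeff_zero_subsumPoly h0]
    · simp [hlt.not_ge, Multiset.count_cons_of_ne hlt.ne]

lemma subsumPoly_eq_filter_ne_mul (lam : Multiset ℕ) (k : ℕ) :
    subsumPoly R lam = subsumPoly R (lam.filter (· ≠ k)) * (1 + X ^ k) ^ lam.count k := by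
  conv_lhs => rw [← lam.filter_ne_add_replicate_count k]
  rw [subsumPoly_add, subsumPoly_replicate]

end SubsumPoly

lemma prime_pow_dvd_one_add_pow_sub {R : Type*} [CommRing R] {p : ℕ} (hp : p.Prime) (x : R)
    (m : ℕ) : (p : R) ^ (m + 1) ∣ (1 + x) ^ p ^ (m + 1) - (1 + x ^ p) ^ p ^ m := by
  have hfrob : (p : R) ∣ (1 + x) ^ p - (1 + x ^ p) := by
    obtain ⟨r, hr⟩ := exists_add_pow_prime_eq hp (1 : R) x
    exact ⟨x * r, by rw [hr]; ring⟩
  simpa [← pow_mul, ← pow_succ'] using dvd_sub_pow_of_dvd_sub hfrob m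

def IsMove (p m : ℕ) (lam mu : Multiset ℕ) : Prop :=
  ∃ k : ℕ, 1 ≤ k ∧ Multiset.replicate (p ^ m) k ≤ lam ∧
    mu = lam - Multiset.replicate (p ^ m) k + Multiset.replicate (p ^ (m - 1)) (p * k)

section Moves

variable {p m : ℕ}

lemma subsumPoly_eq_of_isMove (hp : p.Prime) (hm : 1 ≤ m) {lam mu : Multiset ℕ}
    (h : IsMove p m lam mu) : subsumPoly (ZMod (p ^ m)) lam = subsumPoly (ZMod (p ^ m)) mu := by
  obtain ⟨k, -, hle, rfl⟩ := h
  obtain ⟨m, rfl⟩ := Nat.exists_eq_add_of_le' hm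
  have hpm : (p : (ZMod (p ^ (m + 1)))[X]) ^ (m + 1) = 0 := by
    rw [← Nat.cast_pow, ← map_natCast C, ZMod.natCast_self, map_zero]
  have hblock :
      (1 + X ^ k : (ZMod (p ^ (m + 1)))[X]) ^ p ^ (m + 1) = (1 + X ^ (p * k)) ^ p ^ m := by
    rw [← sub_eq_zero, ← zero_dvd_iff, ← hpm, mul_comm, pow_mul]
    exact prime_pow_dvd_one_add_pow_sub hp _ m
  conv_lhs => rw [← tsub_add_cancel_of_le hle]
  simp [hblock]

lemma subsumPoly_eq_of_eqvGen (hp : p.Prime) (hm : 1 ≤ m) {lam mu : Multiset ℕ}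
    (h : Relation.EqvGen (IsMove p m) lam mu) :
    subsumPoly (ZMod (p ^ m)) lam = subsumPoly (ZMod (p ^ m)) mu := by
  induction h with
  | rel _ _ h => exact subsumPoly_eq_of_isMove hp hm h
  | refl => rfl
  | symm _ _ _ ih => exact ih.symm
  | trans _ _ _ _ _ ih₁ ih₂ => exact ih₁.trans ih₂

end Moves

def IsReducedMod (q : ℕ) (lam : Multiset ℕ) : Prop :=
  0 ∉ lam ∧ ∀ k, lam.count k < q

lemma IsReducedMod.filter {q : ℕ} {lam : Multiset ℕ} (h : IsReducedMod q lam) (P : ℕ → Prop)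
    [DecidablePred P] : IsReducedMod q (lam.filter P) :=
  ⟨fun h0 => h.1 (Multiset.mem_of_mem_filter h0),
    fun k => (Multiset.count_le_of_le k (Multiset.filter_le P lam)).trans_lt (h.2 k)⟩

theorem exists_eqvGen_isMove_isReducedMod {p m : ℕ} (hp : 1 < p) (hm : 1 ≤ m)
    {lam : Multiset ℕ} (h0 : 0 ∉ lam) :
    ∃ mu, Relation.EqvGen (IsMove p m) lam mu ∧ IsReducedMod (p ^ m) mu := by
  by_cases hred : ∀ k, lam.count k < p ^ m
  · exact ⟨lam, .refl _, h0, hred⟩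
  simp only [not_forall, not_lt] at hred
  obtain ⟨k, hk⟩ := hred
  have hle : Multiset.replicate (p ^ m) k ≤ lam := Multiset.le_count_iff_replicate_le.mp hk
  have hk0 : k ≠ 0 := by
    rintro rfl
    exact h0 (Multiset.count_pos.mp ((pow_pos (zero_lt_one.trans hp) m).trans_le hk))
  have hmove : IsMove p m lam (lam - Multiset.replicate (p ^ m) k +
      Multiset.replicate (p ^ (m - 1)) (p * k)) := ⟨k, Nat.one_le_iff_ne_zero.mpr hk0, hle, rfl⟩
  have h0' : 0 ∉ lam - Multiset.replicate (p ^ m) k + Multiset.replicate (p ^ (m - 1)) (p * k) := by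
    simp only [Multiset.mem_add, Multiset.mem_replicate, not_or]
    exact ⟨fun h => h0 (Multiset.mem_of_le tsub_le_self h),
      fun h => mul_ne_zero (zero_lt_one.trans hp).ne' hk0 h.2.symm⟩
  obtain ⟨mu, hmu, hred⟩ := exists_eqvGen_isMove_isReducedMod hp hm h0'
  exact ⟨mu, .trans _ _ _ (.rel _ _ hmove) hmu, hred⟩
termination_by Multiset.card lam
decreasing_by
  have hcard := congrArg Multiset.card (tsub_add_cancel_of_le hle)
  have hlt : p ^ (m - 1) < p ^ m := Nat.pow_lt_pow_right hp (by omega)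
  simp only [Multiset.card_add, Multiset.card_replicate] at hcard ⊢
  omega

theorem eq_of_subsumPoly_eq {q : ℕ} {lam mu : Multiset ℕ} (hlam : IsReducedMod q lam)
    (hmu : IsReducedMod q mu) (h : subsumPoly (ZMod q) lam = subsumPoly (ZMod q) mu) :
    lam = mu := by
  rcases (lam + mu).empty_or_exists_mem with hempty | ⟨c, hc⟩
  · rw [add_eq_zero] at hempty
    rw [hempty.1, hempty.2]
  obtain ⟨k, hk, hmin⟩ :=
    (lam + mu).toFinset.exists_min_image id ⟨c, Multiset.mem_toFinset.mpr hc⟩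
  simp only [Multiset.mem_toFinset, id] at hk hmin
  have hk0 : k ≠ 0 := by
    rintro rfl
    rcases Multiset.mem_add.mp hk with h' | h'
    exacts [hlam.1 h', hmu.1 h']
  have hcount : lam.count k = mu.count k := by
    have hcoeff := congrArg (coeff · k) h
    simp only [coeff_subsumPoly_of_forall_le hk0
      (fun c hc => hmin c (Multiset.mem_add.mpr (.inl hc))),
      coeff_subsumPoly_of_forall_le hk0 (fun c hc => hmin c (Multiset.mem_add.mpr (.inr hc))),
      ZMod.natCast_eq_natCast_iff'] at hcoeff
    rwa [Nat.mod_eq_of_lt (hlam.2 k), Nat.mod_eq_of_lt (hmu.2 k)] at hcoeff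
  -- `hpos` makes the recursive call below decrease.
  have hpos : 0 < lam.count k := by
    rcases Multiset.mem_add.mp hk with h' | h'
    exacts [Multiset.count_pos.mpr h', hcount ▸ Multiset.count_pos.mpr h']
  have hrest : lam.filter (· ≠ k) = mu.filter (· ≠ k) := by
    refine eq_of_subsumPoly_eq (hlam.filter _) (hmu.filter _) ?_
    rw [subsumPoly_eq_filter_ne_mul lam k, subsumPoly_eq_filter_ne_mul mu k, hcount] at h
    exact ((monic_one_add_X_pow hk0).pow (mu.count k)).isRegular.right h
  rw [← lam.filter_ne_add_replicate_count k, ← mu.filter_ne_add_replicate_count k, hrest, hcount]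
termination_by Multiset.card lam + Multiset.card mu
decreasing_by
  have := congrArg Multiset.card (lam.filter_ne_add_replicate_count k)
  have := Multiset.card_le_card (Multiset.filter_le (· ≠ k) mu)
  simp only [Multiset.card_add, Multiset.card_replicate] at *
  omega

lemma Finset.injOn_biUnion_id_powerset {α : Type*} [DecidableEq α] {B : Finset (Finset α)}
    (hB : (B : Set (Finset α)).PairwiseDisjoint id) (hne : ∀ b ∈ B, b.Nonempty) :
    Set.InjOn (·.biUnion id) (B.powerset : Set (Finset (Finset α))) := by
  have key : ∀ T ⊆ B, ∀ T' ⊆ B, T.biUnion id = T'.biUnion id → T ⊆ T' := by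
    intro T hT T' hT' h b hb
    obtain ⟨x, hx⟩ := hne b (hT hb)
    obtain ⟨b', hb', hxb'⟩ := mem_biUnion.mp (h ▸ mem_biUnion.mpr ⟨b, hb, hx⟩)
    rwa [hB.elim (hT hb) (hT' hb') (not_disjoint_iff.mpr ⟨x, hx, hxb'⟩)]
  intro T hT T' hT' h
  rw [coe_powerset, Set.mem_preimage, Set.mem_powerset_iff, coe_subset] at hT hT'
  exact (key T hT T' hT' h).antisymm (key T' hT' T hT h.symm)

lemma Finset.prod_one_add_X_pow_card {R α : Type*} [CommSemiring R] [DecidableEq α]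
    {B : Finset (Finset α)} (hB : (B : Set (Finset α)).PairwiseDisjoint id)
    (hne : ∀ b ∈ B, b.Nonempty) :
    ∏ b ∈ B, (1 + X ^ b.card : R[X]) = ∑ s ∈ B.powerset.image (·.biUnion id), X ^ s.card := by
  rw [prod_one_add, sum_image (injOn_biUnion_id_powerset hB hne)]
  refine sum_congr rfl fun T hT => ?_
  rw [prod_pow_eq_pow_sum, card_biUnion (hB.subset (mem_powerset.mp hT))]
  rfl

namespace Equiv.Perm

variable {α : Type*} [DecidableEq α]

lemma smul_finset_eq_self_iff (σ : Perm α) (s : Finset α) : σ • s = s ↔ ∀ x ∈ s, σ x ∈ s := by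
  refine ⟨fun h x hx => h ▸ smul_mem_smul_finset hx, fun h => ?_⟩
  refine eq_of_subset_of_card_le (fun y hy => ?_) (card_smul_finset σ s).ge
  obtain ⟨x, hx, rfl⟩ := mem_smul_finset.mp hy
  exact h x hx

lemma pow_apply_mem_of_smul_finset_eq_self {σ : Perm α} {s : Finset α} (hs : σ • s = s)
    {x : α} (hx : x ∈ s) (i : ℕ) : (σ ^ i) x ∈ s := by
  induction i with
  | zero => simpa using hx
  | succ i ih => simpa [pow_succ'] using (smul_finset_eq_self_iff σ s).mp hs _ ih

variable [Fintype α]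

def cycleBlocks (σ : Perm α) : Finset (Finset α) :=
  σ.cycleFactorsFinset.image support ∪ σ.supportᶜ.image ({·})

variable {σ : Perm α}

lemma mem_of_mem_cycleBlocks_iff_sameCycle {b : Finset α} (hb : b ∈ cycleBlocks σ)
    {x : α} (hx : x ∈ b) (y : α) : y ∈ b ↔ σ.SameCycle x y := by
  rcases mem_union.mp hb with hb | hb
  · obtain ⟨c, hc, rfl⟩ := mem_image.mp hb
    rw [cycle_is_cycleOf hx hc, mem_support_cycleOf_iff]
    exact and_iff_left (mem_cycleFactorsFinset_support_le hc hx)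
  · obtain ⟨z, hz, rfl⟩ := mem_image.mp hb
    rw [mem_singleton.mp hx, mem_singleton]
    exact ⟨fun h => h ▸ SameCycle.refl σ z,
      fun h => (h.eq_of_left (notMem_support.mp (mem_compl.mp hz))).symm⟩

lemma nonempty_of_mem_cycleBlocks {b : Finset α} (hb : b ∈ cycleBlocks σ) : b.Nonempty := by
  rcases mem_union.mp hb with hb | hb
  · obtain ⟨c, hc, rfl⟩ := mem_image.mp hb
    exact (mem_cycleFactorsFinset_iff.mp hc).1.nonempty_support
  · obtain ⟨z, -, rfl⟩ := mem_image.mp hb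
    exact singleton_nonempty z

lemma exists_mem_cycleBlocks (σ : Perm α) (x : α) : ∃ b ∈ cycleBlocks σ, x ∈ b := by
  by_cases hx : x ∈ σ.support
  · refine ⟨(σ.cycleOf x).support, mem_union_left _ (mem_image_of_mem _
      (cycleOf_mem_cycleFactorsFinset_iff.mpr hx)), ?_⟩
    exact mem_support_cycleOf_iff.mpr ⟨SameCycle.refl σ x, hx⟩
  · exact ⟨{x}, mem_union_right _ (mem_image_of_mem _ (mem_compl.mpr hx)), mem_singleton_self x⟩

lemma pairwiseDisjoint_cycleBlocks (σ : Perm α) :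
    (cycleBlocks σ : Set (Finset α)).PairwiseDisjoint id := by
  intro b hb b' hb' hne
  refine disjoint_left.mpr fun x hx hx' => hne (Finset.ext fun y => ?_)
  rw [mem_of_mem_cycleBlocks_iff_sameCycle hb hx, mem_of_mem_cycleBlocks_iff_sameCycle hb' hx']

lemma image_biUnion_powerset_cycleBlocks (σ : Perm α) :
    (cycleBlocks σ).powerset.image (·.biUnion id) = univ.filter fun s => σ • s = s := by
  ext s
  simp only [mem_image, mem_powerset, mem_filter, mem_univ, true_and]
  constructor
  · rintro ⟨T, hT, rfl⟩
    refine (smul_finset_eq_self_iff σ _).mpr fun x hx => ?_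
    obtain ⟨b, hbT, hxb⟩ := mem_biUnion.mp hx
    refine mem_biUnion.mpr ⟨b, hbT, ?_⟩
    exact (mem_of_mem_cycleBlocks_iff_sameCycle (hT hbT) hxb _).mpr
      (sameCycle_apply_right.mpr (SameCycle.refl σ x))
  · intro hs
    refine ⟨(cycleBlocks σ).filter (· ⊆ s), filter_subset _ _, Finset.ext fun x => ?_⟩
    simp only [mem_biUnion, mem_filter, id]
    refine ⟨fun ⟨b, ⟨_, hbs⟩, hxb⟩ => hbs hxb, fun hx => ?_⟩
    obtain ⟨b, hb, hxb⟩ := exists_mem_cycleBlocks σ x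
    refine ⟨b, ⟨hb, fun y hy => ?_⟩, hxb⟩
    obtain ⟨i, -, rfl⟩ := ((mem_of_mem_cycleBlocks_iff_sameCycle hb hxb y).mp hy).exists_pow_eq'
    exact pow_apply_mem_of_smul_finset_eq_self hs hx i

lemma prod_cycleBlocks {M : Type*} [CommMonoid M] (σ : Perm α) (f : ℕ → M) :
    ∏ b ∈ cycleBlocks σ, f b.card = (σ.partition.parts.map f).prod := by
  have hdisj : _root_.Disjoint (σ.cycleFactorsFinset.image support) (σ.supportᶜ.image ({·})) := by
    refine disjoint_left.mpr fun b hb hb' => ?_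
    obtain ⟨c, hc, rfl⟩ := mem_image.mp hb
    obtain ⟨x, hx, hcx⟩ := mem_image.mp hb'
    exact mem_compl.mp hx (mem_cycleFactorsFinset_support_le hc (hcx ▸ mem_singleton_self x))
  have hinj : Set.InjOn support (σ.cycleFactorsFinset : Set (Perm α)) := by
    intro c hc c' hc' h
    obtain ⟨x, hx⟩ := (mem_cycleFactorsFinset_iff.mp hc).1.nonempty_support
    rw [cycle_is_cycleOf hx hc, cycle_is_cycleOf (h ▸ hx) hc']
  rw [cycleBlocks, prod_union hdisj, prod_image hinj,
    prod_image (fun x _ y _ h => singleton_injective h), parts_partition, Multiset.map_add,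
    Multiset.prod_add, cycleType_def, Multiset.map_map, Multiset.map_replicate,
    Multiset.prod_replicate, ← card_compl]
  simp

theorem sum_X_pow_card_of_smul_eq_self (R : Type*) [CommSemiring R] (σ : Perm α) :
    ∑ s ∈ univ.filter fun s : Finset α => σ • s = s, (X : R[X]) ^ s.card =
      subsumPoly R σ.partition.parts := by
  rw [← image_biUnion_powerset_cycleBlocks, ← prod_one_add_X_pow_card
    (pairwiseDisjoint_cycleBlocks σ) fun _ => nonempty_of_mem_cycleBlocks,
    prod_cycleBlocks σ fun c => 1 + X ^ c]
  rfl

theorem card_fixed_powersetCard_eq_coeff (R : Type*) [CommSemiring R] (σ : Perm α) (t : ℕ) :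
    ((univ.filter fun s : Set.powersetCard α t => σ • s = s).card : R) =
      (subsumPoly R σ.partition.parts).coeff t := by
  rw [← sum_X_pow_card_of_smul_eq_self, finsetSum_coeff]
  simp only [coeff_X_pow, sum_boole, filter_filter]
  congr 1
  refine card_bij (fun s _ => (s : Finset α)) (fun s hs => ?_) (fun s _ s' _ h => Subtype.ext h) ?_
  · simp only [mem_filter, mem_univ, true_and] at hs ⊢
    exact ⟨by rw [← Set.powersetCard.coe_smul, hs], (Set.powersetCard.mem_iff.mp s.2).symm⟩
  · intro s hs
    simp only [mem_filter, mem_univ, true_and] at hs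
    exact ⟨⟨s, hs.2.symm⟩, by simpa [Subtype.ext_iff] using hs.1, rfl⟩

end Equiv.Perm

theorem FDRep.character_of_ofMulAction {k G X : Type} [Field k] [Monoid G] [MulAction G X]
    [Fintype X] [DecidableEq X] (g : G) :
    (FDRep.of (Representation.ofMulAction k G X)).character g =
      (univ.filter fun x : X => g • x = x).card := by
  rw [FDRep.character, LinearMap.trace_eq_matrix_trace k (MonoidAlgebra.basis X k), Matrix.trace]
  simp [LinearMap.toMatrix_apply, MonoidAlgebra.basis, Finsupp.single_apply]

lemma fullCycleType_eq_parts_partition {n : ℕ} (σ : Perm (Fin n)) :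
    fullCycleType σ = σ.partition.parts := by
  rw [fullCycleType, parts_partition, sum_cycleType, Fintype.card_fin]

lemma zero_notMem_fullCycleType {n : ℕ} (σ : Perm (Fin n)) : 0 ∉ fullCycleType σ := by
  rw [fullCycleType_eq_parts_partition]
  exact fun h => (σ.partition.parts_pos h).false

lemma ZMod.natCast_eq_natCast_of_sub_eq_mul {q a b : ℕ} {z : ℤ} (h : (a : ℂ) - b = (q : ℂ) * z) :
    (a : ZMod q) = b := by
  have hint : (a : ℤ) - b = q * z := by exact_mod_cast h
  exact_mod_cast ((ZMod.intCast_eq_intCast_iff_dvd_sub (b : ℤ) a q).mpr ⟨z, hint⟩).symm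

/-- If `χ σ ≡ χ σ' (mod p^m)` for every character `χ` of `S_n`, then the
cycle types of `σ` and `σ'` are related by the equivalence relation generated by replacing
`p^m` parts of size `k` with `p^(m-1)` parts of size `pk`. -/
theorem stmt_13 (p m n : ℕ) (hp : p.Prime) (hm : 1 ≤ m)
    (σ σ' : Equiv.Perm (Fin n))
    (hcong : ∀ V : FDRep ℂ (Equiv.Perm (Fin n)),
      ∃ z : ℤ, V.character σ - V.character σ' = ((p : ℂ)) ^ m * (z : ℂ)) :
    Relation.EqvGen
      (fun lam mu : Multiset ℕ => ∃ k : ℕ, 1 ≤ k ∧ Multiset.replicate (p ^ m) k ≤ lam ∧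
        mu = lam - Multiset.replicate (p ^ m) k + Multiset.replicate (p ^ (m - 1)) (p * k))
      (fullCycleType σ) (fullCycleType σ') := by
  have hpoly : subsumPoly (ZMod (p ^ m)) (fullCycleType σ) =
      subsumPoly (ZMod (p ^ m)) (fullCycleType σ') := by
    refine Polynomial.ext fun t => ?_
    obtain ⟨z, hz⟩ :=
      hcong (FDRep.of (Representation.ofMulAction ℂ _ (Set.powersetCard (Fin n) t)))
    rw [FDRep.character_of_ofMulAction, FDRep.character_of_ofMulAction, ← Nat.cast_pow] at hz
    rw [fullCycleType_eq_parts_partition, fullCycleType_eq_parts_partition,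
      ← card_fixed_powersetCard_eq_coeff, ← card_fixed_powersetCard_eq_coeff]
    exact ZMod.natCast_eq_natCast_of_sub_eq_mul hz
  obtain ⟨lam, hσ, hlam⟩ :=
    exists_eqvGen_isMove_isReducedMod hp.one_lt hm (zero_notMem_fullCycleType σ)
  obtain ⟨mu, hσ', hmu⟩ :=
    exists_eqvGen_isMove_isReducedMod hp.one_lt hm (zero_notMem_fullCycleType σ')
  obtain rfl : lam = mu := eq_of_subsumPoly_eq hlam hmu <|
    (subsumPoly_eq_of_eqvGen hp hm hσ).symm.trans <|
      hpoly.trans <| subsumPoly_eq_of_eqvGen hp hm hσ'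
  exact hσ.trans _ _ _ (hσ'.symm _ _)
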